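/- arXiv:2303.03788 — 2 statements merged into one kernel-verified Lean document; each statement's English description precedes it below -/
import Mathlib

section
/- Let μ be a strong limit cardinal of cofinality ℵ₀ and let H be an ℵ₀-indecomposable locally finite group of cardinality < μ. Suppose there exist an index set I of cardinality ≤ μ and a family ⟨G_α : α ∈ I⟩ of locally finite groups of cardinality μ, each containing H as a subgroup, such that every locally finite group G of cardinality μ containing H embeds into some G_α over H. Then there exist an index set J of cardinality ≤ μ and a family ⟨G'_α : α ∈ J⟩ of locally finite groups of cardinality μ, each containing H as a subgroup, such that: (b) every locally finite group G of cardinality μ containing H embeds into some G'_α over H; (c) for distinct α₁, α₂ ∈ J, the groups G'_{α₁} and G'_{α₂} cannot be amalgamated over H, i.e. there is no locally finite group G containing H together with embeddings of G'_{α₁} and of G'_{α₂} into G over H; (d) for each α ∈ J, the pair (G'_α, H) is a universal (μ,<μ)-amalgamation base. -/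
/-!
Enumerate the family in `μ` steps. For each `α`, a chain of length `μ` starts from `G_α`, and at
the step devoted to `β` it adjoins a copy of `G_β` over the stage built so far whenever that stage
embeds into `G_β` over `H`. The union `K_α` has cardinality `μ`, and if `K_α` embeds into `G_β`
over `H` then so does the stage devoted to `β`, so `G_β` embeds into `K_α` over `H`. As every
locally finite group of cardinality `μ` containing `K_α` embeds over `H` into some `G_β`, hence
into `K_α`, the pair `(K_α, H)` is a universal amalgamation base. For such bases, amalgamability
over `H` (in an amalgam cut down to cardinality `μ`) amounts to embeddability over `H`, which is an
equivalence relation; one `K_α` from each class gives the required family.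
-/

universe u
open Cardinal

/-- A group is locally finite if every finitely generated subgroup is finite. -/
def LocallyFiniteGroup (G : Type u) [Group G] : Prop :=
  ∀ s : Finset G, Set.Finite ((Subgroup.closure (s : Set G) : Subgroup G) : Set G)

/-- A group `G` is `θ`-indecomposable when every `⊆`-increasing sequence
`⟨M_i : i < θ⟩` of subgroups of `G` with union `G` contains `G` as a member. -/
def GroupIndecomp (θ : Cardinal.{u}) (G : Type u) [Group G] : Prop :=
  ∀ M : θ.ord.ToType → Subgroup G, Monotone M → (⨆ i, M i) = ⊤ → ∃ i, M i = ⊤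

/-- `G` is a universal locally finite group of cardinality `μ`. -/
def UniversalLF (μ : Cardinal.{u}) (G : Type u) [Group G] : Prop :=
  LocallyFiniteGroup G ∧ #G = μ ∧
    ∀ (H : Type u) (_ : Group H), LocallyFiniteGroup H → #H = μ →
      ∃ f : H →* G, Function.Injective f

/-- The pair `(G, H)` (with `H` embedded in `G` via `e`) is a universal
`(μ, <μ)`-amalgamation base: every locally finite group `G'` of cardinality `μ`
containing `G` embeds into `G` over `H`. -/
def UnivAmalgBase (μ : Cardinal.{u}) (H G : Type u) [Group H] [Group G] (e : H →* G) : Prop :=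
  ∀ (G' : Type u) (_ : Group G'), LocallyFiniteGroup G' → #G' = μ →
    ∀ g : G →* G', Function.Injective g →
      ∃ f : G' →* G, Function.Injective f ∧ f.comp (g.comp e) = e

open Function Set

namespace LocallyFiniteGroup

variable {A B : Type u} [Group A] [Group B]

theorem finite_closure (hB : LocallyFiniteGroup B) {s : Set B} (hs : s.Finite) :
    (Subgroup.closure s : Set B).Finite := by
  simpa using hB hs.toFinset

theorem of_forall_finset_subset_range
    (h : ∀ s : Finset B, ∃ (A : Type u) (_ : Group A) (f : A →* B),
      Injective f ∧ LocallyFiniteGroup A ∧ (s : Set B) ⊆ range f) :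
    LocallyFiniteGroup B := by
  intro s
  obtain ⟨A, _, f, hf, hA, hs⟩ := h s
  rw [← image_preimage_eq_of_subset hs, ← MonoidHom.map_closure, Subgroup.coe_map]
  exact (hA.finite_closure (s.finite_toSet.preimage hf.injOn)).image f

theorem of_injective (hB : LocallyFiniteGroup B) (f : A →* B) (hf : Injective f) :
    LocallyFiniteGroup A := by
  intro s
  refine Finite.of_finite_image ?_ hf.injOn
  rw [← Subgroup.coe_map, MonoidHom.map_closure]
  exact hB.finite_closure (s.finite_toSet.image f)

end LocallyFiniteGroup

theorem Subgroup.cardinalMk_closure_le_max {G : Type u} [Group G] (s : Set G) :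
    #(closure s) ≤ max #s ℵ₀ := by
  rcases s.eq_empty_or_nonempty with rfl | hs
  · simp
  · have : Nonempty s := hs.to_subtype
    have hrange : (FreeGroup.lift ((↑) : s → G)).range = closure s := by
      rw [FreeGroup.range_lift_eq_closure, Subtype.range_coe]
    rw [← Cardinal.mk_freeGroup, ← hrange]
    exact mk_le_of_surjective (FreeGroup.lift _).rangeRestrict_surjective

def EmbedsOver {H A B : Type*} [Group H] [Group A] [Group B] (eA : H →* A) (eB : H →* B) :
    Prop :=
  ∃ f : A →* B, Injective f ∧ f.comp eA = eB

namespace EmbedsOver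

variable {H A B C : Type*} [Group H] [Group A] [Group B] [Group C]
  {eA : H →* A} {eB : H →* B} {eC : H →* C}

theorem refl (eA : H →* A) : EmbedsOver eA eA := ⟨.id A, injective_id, rfl⟩

theorem trans (hAB : EmbedsOver eA eB) (hBC : EmbedsOver eB eC) : EmbedsOver eA eC := by
  obtain ⟨f, hf, rfl⟩ := hAB
  obtain ⟨g, hg, rfl⟩ := hBC
  exact ⟨g.comp f, hg.comp hf, rfl⟩

theorem injective (h : EmbedsOver eA eB) (heA : Injective eA) : Injective eB := by
  obtain ⟨f, hf, rfl⟩ := h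
  exact hf.comp heA

end EmbedsOver

theorem EmbedsOver.cardinalMk_le {H A B : Type u} [Group H] [Group A] [Group B] {eA : H →* A}
    {eB : H →* B} (h : EmbedsOver eA eB) : #A ≤ #B :=
  let ⟨_, hf, _⟩ := h
  mk_le_of_injective hf

theorem exists_injective_extend_val {X G : Type u} {S : Set X} (j : S → G) (hj : Injective j)
    (hcard : #G ≤ #(Sᶜ : Set X)) : ∃ θ : G → X, Injective θ ∧ ∀ x, θ (j x) = x := by
  obtain ⟨emb⟩ := hcard
  have hθj : ∀ x, extend j Subtype.val (fun g ↦ (emb g : X)) (j x) = x := hj.extend_apply _ _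
  have hθ : ∀ g ∉ range j, extend j Subtype.val (fun g ↦ (emb g : X)) g = emb g :=
    fun g hg ↦ extend_apply' _ _ _ hg
  refine ⟨_, fun g g' hgg' ↦ ?_, hθj⟩
  by_cases hg : g ∈ range j <;> by_cases hg' : g' ∈ range j
  · obtain ⟨x, rfl⟩ := hg
    obtain ⟨x', rfl⟩ := hg'
    rw [hθj, hθj] at hgg'
    rw [Subtype.ext hgg']
  · obtain ⟨x, rfl⟩ := hg
    rw [hθj, hθ g' hg'] at hgg'
    exact absurd (hgg' ▸ x.2) (emb g').2
  · obtain ⟨x', rfl⟩ := hg'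
    rw [hθj, hθ g hg] at hgg'
    exact absurd (hgg' ▸ x'.2) (emb g).2
  · rw [hθ g hg, hθ g' hg'] at hgg'
    exact emb.injective (Subtype.ext hgg')

/-- A group structure on a subset of `X`. The operations are total on `X`, so that structures
on different subsets can be compared and united without dependent types. -/
structure GroupOnSet (X : Type u) where
  carrier : Set X
  mul : X → X → X
  one : X
  inv : X → X
  one_mem : one ∈ carrier
  mul_mem {x y : X} : x ∈ carrier → y ∈ carrier → mul x y ∈ carrier
  inv_mem {x : X} : x ∈ carrier → inv x ∈ carrier
  mul_assoc {x y z : X} : x ∈ carrier → y ∈ carrier → z ∈ carrier →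
    mul (mul x y) z = mul x (mul y z)
  one_mul {x : X} : x ∈ carrier → mul one x = x
  inv_mul_cancel {x : X} : x ∈ carrier → mul (inv x) x = one

namespace GroupOnSet

variable {X : Type u}

instance (p : GroupOnSet X) : Group p.carrier :=
  letI : Mul p.carrier := ⟨fun a b ↦ ⟨p.mul a b, p.mul_mem a.2 b.2⟩⟩
  letI : One p.carrier := ⟨⟨p.one, p.one_mem⟩⟩
  letI : Inv p.carrier := ⟨fun a ↦ ⟨p.inv a, p.inv_mem a.2⟩⟩
  Group.ofLeftAxioms (fun a b c ↦ Subtype.ext (p.mul_assoc a.2 b.2 c.2))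
    (fun a ↦ Subtype.ext (p.one_mul a.2)) (fun a ↦ Subtype.ext (p.inv_mul_cancel a.2))

instance : Preorder (GroupOnSet X) where
  le p q := p.carrier ⊆ q.carrier ∧ ∀ x ∈ p.carrier, ∀ y ∈ p.carrier, p.mul x y = q.mul x y
  le_refl _ := ⟨subset_rfl, fun _ _ _ _ ↦ rfl⟩
  le_trans _ _ _ hpq hqr :=
    ⟨hpq.1.trans hqr.1, fun x hx y hy ↦ (hpq.2 x hx y hy).trans (hqr.2 x (hpq.1 hx) y (hpq.1 hy))⟩

section Inclusion

variable {p q : GroupOnSet X} (h : p ≤ q)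

def inclusion : p.carrier →* q.carrier :=
  MonoidHom.mk' (fun x ↦ ⟨x, h.1 x.2⟩) fun x y ↦ Subtype.ext (h.2 _ x.2 _ y.2)

theorem inclusion_injective : Injective (inclusion h) :=
  fun _ _ hxy ↦ Subtype.ext (congrArg Subtype.val hxy :)

theorem one_eq_of_le (h : p ≤ q) : p.one = q.one := congrArg Subtype.val (map_one (inclusion h))

end Inclusion

section ChainUnion

variable {s : Set (GroupOnSet X)}

theorem exists_mem_finset_subset (hs : IsChain (· ≤ ·) s) (hne : s.Nonempty) {t : Finset X}
    (ht : (t : Set X) ⊆ ⋃ p ∈ s, p.carrier) : ∃ p ∈ s, (t : Set X) ⊆ p.carrier :=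
  DirectedOn.exists_mem_subset_of_finset_subset_biUnion hne (hs.directedOn.mono fun _ _ h ↦ h.1) ht

theorem exists_mem_of_mem₃ (hs : IsChain (· ≤ ·) s) (hne : s.Nonempty) {x y z : X}
    (hx : x ∈ ⋃ p ∈ s, p.carrier) (hy : y ∈ ⋃ p ∈ s, p.carrier) (hz : z ∈ ⋃ p ∈ s, p.carrier) :
    ∃ p ∈ s, x ∈ p.carrier ∧ y ∈ p.carrier ∧ z ∈ p.carrier := by
  classical
  obtain ⟨p, hp, hxyz⟩ := exists_mem_finset_subset hs hne (t := {x, y, z})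
    (by simp only [Finset.coe_insert, Finset.coe_singleton, insert_subset_iff,
      singleton_subset_iff]; exact ⟨hx, hy, hz⟩)
  simp only [Finset.coe_insert, Finset.coe_singleton, insert_subset_iff,
    singleton_subset_iff] at hxyz
  exact ⟨p, hp, hxyz⟩

open Classical in
noncomputable def pick (hne : s.Nonempty) (x y : X) : GroupOnSet X :=
  if h : ∃ p ∈ s, x ∈ p.carrier ∧ y ∈ p.carrier then h.choose else hne.some

variable (hne : s.Nonempty)

theorem pick_mem (x y : X) : pick hne x y ∈ s := by
  unfold pick
  split_ifs with h
  exacts [h.choose_spec.1, hne.some_mem]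

theorem mem_pick {p : GroupOnSet X} (hp : p ∈ s) {x y : X} (hx : x ∈ p.carrier)
    (hy : y ∈ p.carrier) : x ∈ (pick hne x y).carrier ∧ y ∈ (pick hne x y).carrier := by
  have h : ∃ p ∈ s, x ∈ p.carrier ∧ y ∈ p.carrier := ⟨p, hp, hx, hy⟩
  rw [pick, dif_pos h]
  exact h.choose_spec.2

variable (hs : IsChain (· ≤ ·) s)
include hs

theorem pick_mul {p : GroupOnSet X} (hp : p ∈ s) {x y : X} (hx : x ∈ p.carrier)
    (hy : y ∈ p.carrier) : (pick hne x y).mul x y = p.mul x y := by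
  obtain ⟨hx', hy'⟩ := mem_pick hne hp hx hy
  rcases hs.total hp (pick_mem hne x y) with h | h
  exacts [(h.2 x hx y hy).symm, h.2 x hx' y hy']

theorem one_eq_of_mem {p q : GroupOnSet X} (hp : p ∈ s) (hq : q ∈ s) : p.one = q.one := by
  rcases hs.total hp hq with h | h
  exacts [one_eq_of_le h, (one_eq_of_le h).symm]

noncomputable def sUnion : GroupOnSet X where
  carrier := ⋃ p ∈ s, p.carrier
  mul x y := (pick hne x y).mul x y
  one := hne.some.one
  inv x := (pick hne x x).inv x
  one_mem := mem_biUnion hne.some_mem hne.some.one_mem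
  mul_mem {x y} hx hy := by
    obtain ⟨p, hp, hx, hy, -⟩ := exists_mem_of_mem₃ hs hne hx hy hx
    rw [pick_mul hne hs hp hx hy]
    exact mem_biUnion hp (p.mul_mem hx hy)
  inv_mem {x} hx := by
    obtain ⟨p, hp, hx⟩ := mem_iUnion₂.mp hx
    exact mem_biUnion (pick_mem hne x x) (inv_mem _ (mem_pick hne hp hx hx).1)
  mul_assoc {x y z} hx hy hz := by
    obtain ⟨p, hp, hx, hy, hz⟩ := exists_mem_of_mem₃ hs hne hx hy hz
    rw [pick_mul hne hs hp hx hy, pick_mul hne hs hp (p.mul_mem hx hy) hz,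
      pick_mul hne hs hp hy hz, pick_mul hne hs hp hx (p.mul_mem hy hz)]
    exact p.mul_assoc hx hy hz
  one_mul {x} hx := by
    obtain ⟨p, hp, hx⟩ := mem_iUnion₂.mp hx
    rw [one_eq_of_mem hs hne.some_mem hp, pick_mul hne hs hp p.one_mem hx]
    exact p.one_mul hx
  inv_mul_cancel {x} hx := by
    obtain ⟨p, hp, hx⟩ := mem_iUnion₂.mp hx
    set q := pick hne x x
    have hq : q ∈ s := pick_mem hne x x
    have hxq : x ∈ q.carrier := (mem_pick hne hp hx hx).1
    rw [pick_mul hne hs hq (q.inv_mem hxq) hxq, q.inv_mul_cancel hxq,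
      one_eq_of_mem hs hq hne.some_mem]

theorem le_sUnion {p : GroupOnSet X} (hp : p ∈ s) : p ≤ sUnion hne hs :=
  ⟨subset_biUnion_of_mem (u := carrier) hp, fun _ hx _ hy ↦ (pick_mul hne hs hp hx hy).symm⟩

theorem locallyFinite_sUnion (hlf : ∀ p ∈ s, LocallyFiniteGroup p.carrier) :
    LocallyFiniteGroup (sUnion hne hs).carrier := by
  classical
  refine LocallyFiniteGroup.of_forall_finset_subset_range fun t ↦ ?_
  obtain ⟨p, hp, htp⟩ := exists_mem_finset_subset hs hne (t := t.image Subtype.val)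
    (by rintro _ hx; obtain ⟨x, -, rfl⟩ := Finset.mem_image.mp hx; exact x.2)
  refine ⟨p.carrier, inferInstance, inclusion (le_sUnion hne hs hp),
    inclusion_injective _, hlf p hp, fun x hx ↦ ⟨⟨x, htp (by simpa using hx)⟩, rfl⟩⟩

theorem cardinalMk_carrier_sUnion_le {μ : Cardinal.{u}} (hμ : ℵ₀ ≤ μ) (hsμ : #s ≤ μ)
    (hcard : ∀ p ∈ s, #p.carrier ≤ μ) : #(sUnion hne hs).carrier ≤ μ :=
  calc #(sUnion hne hs).carrier ≤ #s * ⨆ p : s, #p.1.carrier := mk_biUnion_le _ _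
    _ ≤ μ * μ := mul_le_mul' hsμ (ciSup_le' fun p ↦ hcard p p.2)
    _ = μ := mul_eq_self hμ

end ChainUnion

section Transport

variable {G : Type u} [Group G] (θ : G → X) (hθ : Injective θ)

noncomputable def ofInjective : GroupOnSet X where
  carrier := range θ
  mul x y := θ (invFun θ x * invFun θ y)
  one := θ 1
  inv x := θ (invFun θ x)⁻¹
  one_mem := mem_range_self 1
  mul_mem _ _ := mem_range_self _
  inv_mem _ := mem_range_self _
  mul_assoc := by
    rintro _ _ _ ⟨a, rfl⟩ ⟨b, rfl⟩ ⟨c, rfl⟩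
    simp only [leftInverse_invFun hθ _, _root_.mul_assoc]
  one_mul := by
    rintro _ ⟨a, rfl⟩
    simp only [leftInverse_invFun hθ _, _root_.one_mul]
  inv_mul_cancel := by
    rintro _ ⟨a, rfl⟩
    simp only [leftInverse_invFun hθ _, _root_.inv_mul_cancel]

noncomputable def ofInjectiveEquiv : G ≃* (ofInjective θ hθ).carrier where
  toFun g := ⟨θ g, mem_range_self g⟩
  invFun x := invFun θ x
  left_inv := leftInverse_invFun hθ
  right_inv x := Subtype.ext (invFun_eq x.2)
  map_mul' a b := Subtype.ext <| by
    change θ (a * b) = θ (invFun θ (θ a) * invFun θ (θ b))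
    rw [leftInverse_invFun hθ a, leftInverse_invFun hθ b]

theorem le_ofInjective {p : GroupOnSet X} (j : p.carrier →* G) (hθj : ∀ x, θ (j x) = x) :
    p ≤ ofInjective θ hθ := by
  have hinv : ∀ z : p.carrier, invFun θ z = j z := fun z ↦
    (congrArg (invFun θ) (hθj z)).symm.trans (leftInverse_invFun hθ _)
  refine ⟨fun x hx ↦ ⟨j ⟨x, hx⟩, hθj _⟩, fun x hx y hy ↦ ?_⟩
  change _ = θ (invFun θ x * invFun θ y)
  rw [hinv ⟨x, hx⟩, hinv ⟨y, hy⟩, ← map_mul, hθj]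
  rfl

end Transport

end GroupOnSet

section TransfiniteChain

variable {ι P : Type u} [LinearOrder ι] [WellFoundedLT ι]

noncomputable def transfiniteChain (ub : Set P → P) (step : ι → P → P) : ι → P :=
  wellFounded_lt.fix fun i F ↦ step i (ub (range fun j : Iio i ↦ F j j.2))

theorem transfiniteChain_apply (ub : Set P → P) (step : ι → P → P) (i : ι) :
    transfiniteChain ub step i = step i (ub (transfiniteChain ub step '' Iio i)) := by
  rw [transfiniteChain, WellFounded.fix_eq, image_eq_range]

theorem monotone_transfiniteChain [Preorder P] {ub : Set P → P} {step : ι → P → P}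
    (hub : ∀ s : Set P, IsChain (· ≤ ·) s → #s ≤ #ι → ∀ x ∈ s, x ≤ ub s)
    (hstep : ∀ i x, x ≤ step i x) : Monotone (transfiniteChain ub step) := by
  set F := transfiniteChain ub step
  suffices h : ∀ i, ∀ j < i, F j ≤ F i from
    fun j i hji ↦ hji.eq_or_lt.elim (fun h ↦ h ▸ le_rfl) (h i j)
  intro i
  induction i using WellFoundedLT.induction with
  | _ i ih =>
    have hle : ∀ a ∈ Iio i, ∀ b ≤ a, F b ≤ F a := fun a ha b hba ↦
      hba.eq_or_lt.elim (fun h ↦ h ▸ le_rfl) (ih a ha b)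
    have hchain : IsChain (· ≤ ·) (F '' Iio i) := by
      rintro _ ⟨a, ha, rfl⟩ _ ⟨b, hb, rfl⟩ -
      rcases le_total a b with hab | hba
      exacts [Or.inl (hle b hb a hab), Or.inr (hle a ha b hba)]
    intro j hj
    rw [show F i = _ from transfiniteChain_apply ub step i]
    exact (hub _ hchain (mk_image_le.trans (mk_set_le _)) _ (mem_image_of_mem F hj)).trans
      (hstep _ _)

theorem exists_monotone_of_step [Preorder P] {R : ι → P → P → Prop}
    (hub : ∀ s : Set P, IsChain (· ≤ ·) s → #s ≤ #ι → ∃ b, ∀ x ∈ s, x ≤ b)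
    (hstep : ∀ i x, ∃ y, x ≤ y ∧ R i x y) :
    ∃ F : ι → P, Monotone F ∧ ∀ i, ∃ x, (∀ j < i, F j ≤ x) ∧ x ≤ F i ∧ R i x (F i) := by
  classical
  obtain ⟨b₀, -⟩ := hub ∅ IsChain.empty (by simp)
  choose step hstep using hstep
  let ub (s : Set P) : P := if h : IsChain (· ≤ ·) s ∧ #s ≤ #ι then (hub s h.1 h.2).choose else b₀
  have hub' : ∀ s : Set P, IsChain (· ≤ ·) s → #s ≤ #ι → ∀ x ∈ s, x ≤ ub s :=
    fun s hs hsι ↦ by simpa only [ub, dif_pos (And.intro hs hsι)] using (hub s hs hsι).choose_spec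
  have hF := monotone_transfiniteChain hub' fun i x ↦ (hstep i x).1
  refine ⟨_, hF, fun i ↦ ⟨ub (transfiniteChain ub step '' Iio i), fun j hj ↦ ?_, ?_⟩⟩
  · exact hub' _ (hF.isChain_image (isChain_of_trichotomous _))
      (mk_image_le.trans (mk_set_le _)) _ (mem_image_of_mem _ hj)
  · rw [transfiniteChain_apply]
    exact hstep i _

end TransfiniteChain

namespace AbsorbingExtension

variable {X : Type u} (μ : Cardinal.{u}) (p₀ : GroupOnSet X)

abbrev Approx : Type u :=
  {p : GroupOnSet X // p₀ ≤ p ∧ LocallyFiniteGroup p.carrier ∧ #p.carrier ≤ μ}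

variable {μ p₀}

theorem Approx.exists_upperBound (hμ : ℵ₀ ≤ μ) (hp₀ : LocallyFiniteGroup p₀.carrier)
    (hp₀μ : #p₀.carrier ≤ μ) (s : Set (Approx μ p₀)) (hs : IsChain (· ≤ ·) s) (hsμ : #s ≤ μ) :
    ∃ b, ∀ x ∈ s, x ≤ b := by
  rcases s.eq_empty_or_nonempty with rfl | hne
  · exact ⟨⟨p₀, le_rfl, hp₀, hp₀μ⟩, by simp⟩
  have ht : IsChain (· ≤ ·) (Subtype.val '' s) := Subtype.mono_coe _ |>.isChain_image hs
  let U := GroupOnSet.sUnion (hne.image _) ht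
  have hle : ∀ x ∈ s, x.1 ≤ U := fun x hx ↦ GroupOnSet.le_sUnion _ ht (mem_image_of_mem _ hx)
  refine ⟨⟨U, hne.some.2.1.trans (hle _ hne.some_mem), GroupOnSet.locallyFinite_sUnion _ ht ?_,
    GroupOnSet.cardinalMk_carrier_sUnion_le _ ht hμ (mk_image_le.trans hsμ) ?_⟩, hle⟩
  all_goals rintro _ ⟨x, -, rfl⟩
  exacts [x.2.2.1, x.2.2.2]

variable {H : Type u} [Group H] (e₀ : H →* p₀.carrier)

def Approx.embed (p : Approx μ p₀) : H →* p.1.carrier := (GroupOnSet.inclusion p.2.1).comp e₀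

theorem Approx.embedsOver_of_le {p q : Approx μ p₀} (h : p ≤ q) :
    EmbedsOver (p.embed e₀) (q.embed e₀) :=
  ⟨GroupOnSet.inclusion h, GroupOnSet.inclusion_injective h, rfl⟩

theorem Approx.exists_absorbing_step (hμ : ℵ₀ ≤ μ) (hX : μ < #X) {G : Type u} [Group G]
    (eG : H →* G) (hG : LocallyFiniteGroup G) (hGμ : #G ≤ μ) (c : Approx μ p₀) :
    ∃ d, c ≤ d ∧ (EmbedsOver (c.embed e₀) eG → EmbedsOver eG (d.embed e₀)) := by
  by_cases hc : EmbedsOver (c.embed e₀) eG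
  swap
  · exact ⟨c, le_rfl, fun h ↦ absurd h hc⟩
  obtain ⟨j, hj, hjH⟩ := hc
  have : Infinite X := Cardinal.infinite_iff.mpr (hμ.trans hX.le)
  have hroom : #G ≤ #(c.1.carrierᶜ : Set X) := by
    rw [mk_compl_of_infinite _ (c.2.2.2.trans_lt hX)]
    exact hGμ.trans hX.le
  obtain ⟨θ, hθ, hθj⟩ := exists_injective_extend_val j hj hroom
  have hcθ := GroupOnSet.le_ofInjective θ hθ j hθj
  let ψ := GroupOnSet.ofInjectiveEquiv θ hθ
  refine ⟨⟨_, c.2.1.trans hcθ, hG.of_injective ψ.symm.toMonoidHom ψ.symm.injective,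
    mk_range_le.trans hGμ⟩, hcθ, fun _ ↦ ⟨ψ.toMonoidHom, ψ.injective, ?_⟩⟩
  ext h
  change θ (eG h) = (e₀ h : X)
  rw [← hjH, MonoidHom.comp_apply, hθj]
  rfl

theorem exists_absorbing_approx {I : Type u} {G : I → Type u} [∀ β, Group (G β)]
    (e : ∀ β, H →* G β) (hμ : ℵ₀ ≤ μ) (hX : μ < #X) [Nonempty I] (hI : #I ≤ μ)
    (hG : ∀ β, LocallyFiniteGroup (G β) ∧ #(G β) ≤ μ) (hp₀ : LocallyFiniteGroup p₀.carrier)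
    (hp₀μ : #p₀.carrier ≤ μ) :
    ∃ K : Approx μ p₀, ∀ β, EmbedsOver (K.embed e₀) (e β) → EmbedsOver (e β) (K.embed e₀) := by
  have hι : #μ.ord.ToType = μ := mk_ord_toType μ
  obtain ⟨enum, henum⟩ : ∃ enum : μ.ord.ToType → I, Surjective enum := by
    obtain ⟨f⟩ : Nonempty (I ↪ μ.ord.ToType) := (hI.trans hι.ge)
    exact ⟨invFun f, invFun_surjective f.injective⟩
  have hub := Approx.exists_upperBound hμ hp₀ hp₀μ
  obtain ⟨F, hF, hFstep⟩ := exists_monotone_of_step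
    (R := fun i c d ↦ EmbedsOver (c.embed e₀) (e (enum i)) → EmbedsOver (e (enum i)) (d.embed e₀))
    (fun s hs hsι ↦ hub s hs (hsι.trans_eq hι))
    (fun i ↦ Approx.exists_absorbing_step e₀ hμ hX _ (hG _).1 (hG _).2)
  obtain ⟨K, hK⟩ := hub (range F) hF.isChain_range (mk_range_le.trans_eq hι)
  refine ⟨K, fun β hβ ↦ ?_⟩
  obtain ⟨i, rfl⟩ := henum β
  obtain ⟨c, -, hcF, hc⟩ := hFstep i
  have hFK := hK _ (mem_range_self i)
  exact (hc ((Approx.embedsOver_of_le e₀ (hcF.trans hFK)).trans hβ)).trans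
    (Approx.embedsOver_of_le e₀ hFK)

end AbsorbingExtension

theorem exists_absorbing_extension {H I A : Type u} [Group H] [Group A] {G : I → Type u}
    [∀ β, Group (G β)] (e : ∀ β, H →* G β) {μ : Cardinal.{u}} (hμ : ℵ₀ ≤ μ) (hI : #I ≤ μ)
    (hG : ∀ β, LocallyFiniteGroup (G β) ∧ #(G β) ≤ μ) (eA : H →* A) (hA : LocallyFiniteGroup A)
    (hAμ : #A ≤ μ) :
    ∃ (K : Type u) (_ : Group K) (eK : H →* K), LocallyFiniteGroup K ∧ #K ≤ μ ∧
      EmbedsOver eA eK ∧ ∀ β, EmbedsOver eK (e β) → EmbedsOver (e β) eK := by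
  rcases isEmpty_or_nonempty I with hI₀ | hI₀
  · exact ⟨A, inferInstance, eA, hA, hAμ, .refl eA, isEmptyElim⟩
  have hX : μ < #(Set μ.out) := by rw [mk_set, mk_out]; exact cantor μ
  obtain ⟨θ⟩ : Nonempty (A ↪ Set μ.out) := hAμ.trans hX.le
  let ψ := GroupOnSet.ofInjectiveEquiv θ θ.injective
  obtain ⟨K, hK⟩ := AbsorbingExtension.exists_absorbing_approx (ψ.toMonoidHom.comp eA) e hμ hX hI hG
    (hA.of_injective ψ.symm.toMonoidHom ψ.symm.injective) (mk_range_le.trans hAμ)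
  exact ⟨K.1.carrier, inferInstance, _, K.2.2.1, K.2.2.2,
    ⟨(GroupOnSet.inclusion K.2.1).comp ψ.toMonoidHom,
      (GroupOnSet.inclusion_injective K.2.1).comp ψ.injective, rfl⟩, hK⟩

def IsUniversalFamily (μ : Cardinal.{u}) {H I : Type u} [Group H] {G : I → Type u}
    [∀ β, Group (G β)] (e : ∀ β, H →* G β) : Prop :=
  ∀ (W : Type u) (_ : Group W), LocallyFiniteGroup W → #W = μ →
    ∀ eW : H →* W, Injective eW → ∃ β, EmbedsOver eW (e β)

theorem cardinalMk_closure_range_union_range {A B W : Type u} [Group A] [Group B] [Group W]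
    {μ : Cardinal.{u}} (hμ : ℵ₀ ≤ μ) {f₁ : A →* W} (hf₁ : Injective f₁) (f₂ : B →* W)
    (hA : #A = μ) (hB : #B ≤ μ) : #(Subgroup.closure (range f₁ ∪ range f₂)) = μ := by
  refine le_antisymm ((Subgroup.cardinalMk_closure_le_max _).trans (max_le ?_ hμ)) ?_
  · calc #(range f₁ ∪ range f₂ : Set W) ≤ #(range f₁) + #(range f₂) := mk_union_le _ _
      _ ≤ μ + μ := add_le_add (mk_range_le.trans hA.le) (mk_range_le.trans hB)
      _ = μ := add_eq_self hμ
  · calc μ = #(range f₁) := (mk_range_eq f₁ hf₁).symm ▸ hA.symm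
      _ ≤ _ := mk_le_mk_of_subset (subset_union_left.trans Subgroup.subset_closure)

namespace UnivAmalgBase

variable {μ : Cardinal.{u}} {H K : Type u} [Group H] [Group K] {eK : H →* K}

theorem of_absorbing {I : Type u} {G : I → Type u} [∀ β, Group (G β)] {e : ∀ β, H →* G β}
    (he : IsUniversalFamily μ e) (heK : Injective eK)
    (habs : ∀ β, EmbedsOver eK (e β) → EmbedsOver (e β) eK) : UnivAmalgBase μ H K eK := by
  intro W _ hW hWμ g hg
  obtain ⟨β, hβ⟩ := he W _ hW hWμ (g.comp eK) (hg.comp heK)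
  exact hβ.trans (habs β ((show EmbedsOver eK (g.comp eK) from ⟨g, hg, rfl⟩).trans hβ))

variable (hμ : ℵ₀ ≤ μ) (hK : UnivAmalgBase μ H K eK) (hKμ : #K = μ)
include hμ hK hKμ

theorem embedsOver_of_amalgamation {B W : Type u} [Group B] [Group W] {eB : H →* B}
    (hBμ : #B ≤ μ) (hW : LocallyFiniteGroup W) {f₁ : K →* W} {f₂ : B →* W} (hf₁ : Injective f₁)
    (hf₂ : Injective f₂) (heq : f₁.comp eK = f₂.comp eB) : EmbedsOver eB eK := by
  set S := Subgroup.closure (range f₁ ∪ range f₂)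
  let g₁ := f₁.codRestrict S fun a ↦ Subgroup.subset_closure (Or.inl (mem_range_self a))
  let g₂ := f₂.codRestrict S fun b ↦ Subgroup.subset_closure (Or.inr (mem_range_self b))
  have hg₁ : Injective g₁ := fun _ _ h ↦ hf₁ (congrArg Subtype.val h)
  have hg₂ : Injective g₂ := fun _ _ h ↦ hf₂ (congrArg Subtype.val h)
  obtain ⟨f, hf, hfK⟩ := hK S _ (hW.of_injective S.subtype S.subtype_injective)
    (cardinalMk_closure_range_union_range hμ hf₁ f₂ hKμ hBμ) g₁ hg₁
  have hg : g₁.comp eK = g₂.comp eB := MonoidHom.ext fun h ↦ Subtype.ext (DFunLike.congr_fun heq h)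
  exact ⟨f.comp g₂, hf.comp hg₂, by rw [MonoidHom.comp_assoc, ← hg, hfK]⟩

theorem embedsOver_symm {B : Type u} [Group B] {eB : H →* B} (hBμ : #B ≤ μ)
    (hB : LocallyFiniteGroup B) (h : EmbedsOver eK eB) : EmbedsOver eB eK :=
  let ⟨f, hf, hfK⟩ := h
  hK.embedsOver_of_amalgamation hμ hKμ hBμ hB hf (f₂ := .id B) injective_id (by rw [hfK]; rfl)

end UnivAmalgBase

theorem family_implies_disjoint_family_general (μ : Cardinal.{u})
    (hsl : μ.IsStrongLimit)
    (H : Type u) [Group H]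
    (I : Type u) (hI : #I ≤ μ) (Gf : I → Type u) [∀ α, Group (Gf α)]
    (e : ∀ α, H →* Gf α)
    (hfam : ∀ α, LocallyFiniteGroup (Gf α) ∧ #(Gf α) = μ ∧ Function.Injective (e α))
    (hcover : ∀ (G : Type u) (_ : Group G), LocallyFiniteGroup G → #G = μ →
      ∀ eG : H →* G, Function.Injective eG →
        ∃ α, ∃ f : G →* Gf α, Function.Injective f ∧ f.comp eG = e α) :
    ∃ (J : Type u), #J ≤ μ ∧
      ∃ (G' : J → Type u) (_ : ∀ β, Group (G' β)) (e' : ∀ β, H →* G' β),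
        (∀ β, LocallyFiniteGroup (G' β) ∧ #(G' β) = μ ∧ Function.Injective (e' β)) ∧
        -- (b) every locally finite group of cardinality μ extending H embeds into some G'_β over H
        (∀ (G : Type u) (_ : Group G), LocallyFiniteGroup G → #G = μ →
          ∀ eG : H →* G, Function.Injective eG →
            ∃ β, ∃ f : G →* G' β, Function.Injective f ∧ f.comp eG = e' β) ∧
        -- (c) distinct members of the family cannot be amalgamated over H
        (∀ β₁ β₂, β₁ ≠ β₂ →
          ¬ ∃ (G : Type u) (_ : Group G), LocallyFiniteGroup G ∧
            ∃ (f₁ : G' β₁ →* G) (f₂ : G' β₂ →* G),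
              Function.Injective f₁ ∧ Function.Injective f₂ ∧
              f₁.comp (e' β₁) = f₂.comp (e' β₂)) ∧
        -- (d) each pair (G'_β, H) is a universal (μ,<μ)-amalgamation base
        (∀ β, UnivAmalgBase μ H (G' β) (e' β)) := by
  have hμ : ℵ₀ ≤ μ := hsl.aleph0_le
  choose K _ eK hK hKle hGK hKabs using fun α ↦ exists_absorbing_extension e hμ hI
    (fun β ↦ ⟨(hfam β).1, (hfam β).2.1.le⟩) (e α) (hfam α).1 (hfam α).2.1.le
  have hKμ : ∀ α, #(K α) = μ := fun α ↦ (hKle α).antisymm ((hfam α).2.1 ▸ (hGK α).cardinalMk_le)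
  have heK : ∀ α, Injective (eK α) := fun α ↦ (hGK α).injective (hfam α).2.2
  have hbase : ∀ α, UnivAmalgBase μ H (K α) (eK α) := fun α ↦ .of_absorbing hcover (heK α) (hKabs α)
  let s : Setoid I :=
    { r α β := EmbedsOver (eK α) (eK β)
      iseqv := ⟨fun α ↦ .refl _, fun h ↦ (hbase _).embedsOver_symm hμ (hKμ _) (hKle _) (hK _) h,
        .trans⟩ }
  refine ⟨Quotient s, mk_quotient_le.trans hI, fun q ↦ K q.out, fun _ ↦ inferInstance,
    fun q ↦ eK q.out, fun q ↦ ⟨hK _, hKμ _, heK _⟩, ?_, ?_, fun q ↦ hbase _⟩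
  · intro G _ hG hGμ eG heG
    obtain ⟨α, hα⟩ := hcover G _ hG hGμ eG heG
    exact ⟨⟦α⟧, (EmbedsOver.trans hα (hGK α)).trans (s.symm (Quotient.mk_out (s := s) α))⟩
  · rintro q₁ q₂ hq ⟨W, _, hW, f₁, f₂, hf₁, hf₂, heq⟩
    exact hq (Quotient.out_equiv_out.mp (s.symm
      ((hbase _).embedsOver_of_amalgamation hμ (hKμ _) (hKle _) hW hf₁ hf₂ heq)))

/-- the implication (B) ⇒ (B)⁺ of Theorem 2.6. -/
theorem family_implies_disjoint_family (μ : Cardinal.{u})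
    (hsl : μ.IsStrongLimit) (hcof : μ.ord.cof = ℵ₀)
    (H : Type u) [Group H] (hH : LocallyFiniteGroup H)
    (hHind : GroupIndecomp ℵ₀ H) (hHc : #H < μ)
    (I : Type u) (hI : #I ≤ μ) (Gf : I → Type u) [∀ α, Group (Gf α)]
    (e : ∀ α, H →* Gf α)
    (hfam : ∀ α, LocallyFiniteGroup (Gf α) ∧ #(Gf α) = μ ∧ Function.Injective (e α))
    (hcover : ∀ (G : Type u) (_ : Group G), LocallyFiniteGroup G → #G = μ →
      ∀ eG : H →* G, Function.Injective eG →
        ∃ α, ∃ f : G →* Gf α, Function.Injective f ∧ f.comp eG = e α) :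
    ∃ (J : Type u), #J ≤ μ ∧
      ∃ (G' : J → Type u) (_ : ∀ β, Group (G' β)) (e' : ∀ β, H →* G' β),
        (∀ β, LocallyFiniteGroup (G' β) ∧ #(G' β) = μ ∧ Function.Injective (e' β)) ∧
        -- (b) every locally finite group of cardinality μ extending H embeds into some G'_β over H
        (∀ (G : Type u) (_ : Group G), LocallyFiniteGroup G → #G = μ →
          ∀ eG : H →* G, Function.Injective eG →
            ∃ β, ∃ f : G →* G' β, Function.Injective f ∧ f.comp eG = e' β) ∧
        -- (c) distinct members of the family cannot be amalgamated over H
        (∀ β₁ β₂, β₁ ≠ β₂ →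
          ¬ ∃ (G : Type u) (_ : Group G), LocallyFiniteGroup G ∧
            ∃ (f₁ : G' β₁ →* G) (f₂ : G' β₂ →* G),
              Function.Injective f₁ ∧ Function.Injective f₂ ∧
              f₁.comp (e' β₁) = f₂.comp (e' β₂)) ∧
        -- (d) each pair (G'_β, H) is a universal (μ,<μ)-amalgamation base
        (∀ β, UnivAmalgBase μ H (G' β) (e' β)) :=
  family_implies_disjoint_family_general μ hsl H I hI Gf e hfam hcover
end

section
/- Let μ be a strong limit cardinal of cofinality ℵ₀, let G₁, G₂ ∈ K^spc_μ, let H be an ℵ₀-indecomposable locally finite group, and let f_ℓ be an embedding of H into G_ℓ for ℓ = 1,2. If there exist a locally finite group G of cardinality μ and embeddings g_ℓ of G_ℓ into G (ℓ = 1,2) with g₁ ∘ f₁ = g₂ ∘ f₂, then there is an isomorphism h from G₁ onto G₂ with h ∘ f₁ = f₂. -/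
universe u
open Cardinal

/-- `G` belongs to the class `K^spc_μ`. -/
def KSpc (μ : Cardinal.{u}) (G : Type u) [Group G] : Prop :=
  LocallyFiniteGroup G ∧ #G = μ ∧
  -- (b) every small subgroup is covered by an increasing ω-chain of ℵ₀-indecomposable
  -- subgroups with small union, and G itself is such a union
  ((∀ H : Subgroup G, #H < μ →
      ∃ Hn : ℕ → Subgroup G, Monotone Hn ∧ (∀ n, GroupIndecomp ℵ₀ ↥(Hn n)) ∧
        #(↥(⨆ n, Hn n)) < μ ∧ H ≤ ⨆ n, Hn n) ∧
    (∃ Gn : ℕ → Subgroup G, Monotone Gn ∧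
      (∀ n, GroupIndecomp ℵ₀ ↥(Gn n) ∧ #(Gn n) < μ) ∧ (⨆ n, Gn n) = ⊤)) ∧
  -- (c) for every ℵ₀-indecomposable small subgroup H, (G,H) is a universal
  -- (μ,<μ)-amalgamation base
  (∀ H : Subgroup G, #H < μ → GroupIndecomp ℵ₀ ↥H →
    UnivAmalgBase μ (↥H) G H.subtype) ∧
  -- (d) compatible ℵ₀-indecomposable small extensions of small ℵ₀-indecomposable
  -- subgroups embed over them
  (∀ H : Subgroup G, #H < μ → GroupIndecomp ℵ₀ ↥H →
    ∀ (H' : Type u) (_ : Group H'), LocallyFiniteGroup H' → #H' < μ → GroupIndecomp ℵ₀ H' →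
      ∀ eH : ↥H →* H', Function.Injective eH →
        (∃ (Gp : Type u) (_ : Group Gp), LocallyFiniteGroup Gp ∧ #Gp ≤ μ ∧
          ∃ (φ : G →* Gp) (ψ : H' →* Gp), Function.Injective φ ∧ Function.Injective ψ ∧
            ∀ x : ↥H, φ (x : G) = ψ (eH x)) →
        ∃ f : H' →* G, Function.Injective f ∧ ∀ x : ↥H, f (eH x) = (x : G))

/-! A back-and-forth argument of length `ω`. Write `G₁`, `G₂` as unions of `ω`-chains `C₁ n`,
`C₂ n` of small `ℵ₀`-indecomposable subgroups. Property (c) of `G₂` at the image of `H` turns the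
common extension `G` into an embedding `G₁ → G₂` over `H`. Given an embedding `u : G₁ → G₂` and a
small indecomposable `A ≤ G₁`, (c) for `G₁` at `A` gives `v : G₂ → G₁` inverting `u` on `A`, and
(c) for `G₂` at a small indecomposable `B ⊇ u(A) ∪ C₂ n` (found by (b)) gives `u' : G₁ → G₂`
inverting `v` on `B`. Then `u'` agrees with `u` on `A` and `B ⊆ u'(A')` for a small indecomposable
`A' ⊇ v(B) ∪ C₁ (n+1)`. The embeddings stabilise along `A ≤ A' ≤ ⋯`, which exhausts `G₁`, and their
limit is onto because the `C₂ n` exhaust `G₂`. -/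

open Function Set

section Indecomposable

theorem nonempty_orderIso_toType_ord_aleph0 :
    Nonempty (ULift.{u} ℕ ≃o (ℵ₀ : Cardinal.{u}).ord.ToType) := by
  have h : Ordinal.type (ULift.down.{u} ⁻¹'o ((· < ·) : ℕ → ℕ → Prop)) =
      Ordinal.type ((· < ·) : (ℵ₀ : Cardinal.{u}).ord.ToType → _ → Prop) := by
    rw [Ordinal.type_ulift, Ordinal.type_nat_lt, Ordinal.type_toType, Cardinal.ord_aleph0,
      Ordinal.lift_omega0]
  exact (Ordinal.type_eq.mp h).map OrderIso.ofRelIsoLT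

variable {G K : Type u} [Group G] [Group K]

theorem GroupIndecomp.exists_eq_top_of_nat (h : GroupIndecomp ℵ₀ G) {M : ℕ → Subgroup G}
    (hM : Monotone M) (htop : ⨆ n, M n = ⊤) : ∃ n, M n = ⊤ := by
  obtain ⟨e⟩ := nonempty_orderIso_toType_ord_aleph0.{u}
  have hsurj : Surjective fun i => (e.symm i).down := fun n => ⟨e ⟨n⟩, by simp⟩
  obtain ⟨i, hi⟩ := h (fun i => M (e.symm i).down) (fun i j hij => hM (e.symm.monotone hij))
    (by rw [hsurj.iSup_comp M, htop])
  exact ⟨_, hi⟩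

theorem GroupIndecomp.of_mulEquiv {θ : Cardinal.{u}} (h : GroupIndecomp θ G) (e : G ≃* K) :
    GroupIndecomp θ K := by
  intro M hM htop
  have hmap_top : (⊤ : Subgroup K).map e.symm.toMonoidHom = ⊤ :=
    Subgroup.map_top_of_surjective _ e.symm.surjective
  obtain ⟨i, hi⟩ := h (fun i => (M i).map e.symm.toMonoidHom)
    (fun i j hij => Subgroup.map_mono (hM hij)) (by rw [← Subgroup.map_iSup, htop, hmap_top])
  exact ⟨i, Subgroup.map_injective e.symm.injective (hi.trans hmap_top.symm)⟩

theorem GroupIndecomp.exists_le_of_le_iSup {S : Subgroup G} (hS : GroupIndecomp ℵ₀ S)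
    {M : ℕ → Subgroup G} (hM : Monotone M) (hle : S ≤ ⨆ n, M n) : ∃ n, S ≤ M n := by
  have htop : ⨆ n, (M n).comap S.subtype = ⊤ := by
    refine eq_top_iff.mpr fun x _ => ?_
    obtain ⟨n, hn⟩ := (Subgroup.mem_iSup_of_directed hM.directed_le).mp (hle x.2)
    exact Subgroup.mem_iSup_of_mem n hn
  obtain ⟨n, hn⟩ := hS.exists_eq_top_of_nat (fun _ _ hij => Subgroup.comap_mono (hM hij)) htop
  refine ⟨n, fun x hx => ?_⟩
  have : (⟨x, hx⟩ : S) ∈ (M n).comap S.subtype := hn ▸ Subgroup.mem_top _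
  exact this

end Indecomposable

section Small

variable {μ : Cardinal.{u}} {G K : Type u} [Group G] [Group K]

theorem LocallyFiniteGroup.mk_closure_lt (hG : LocallyFiniteGroup G) (hμ : ℵ₀ ≤ μ)
    {s : Set G} (hs : #s < μ) : #(Subgroup.closure s) < μ := by
  rcases lt_or_ge #s ℵ₀ with hfin | hinf
  · have hs' := lt_aleph0_iff_set_finite.mp hfin
    have := hG hs'.toFinset
    rw [hs'.coe_toFinset] at this
    exact this.lt_aleph0.trans_le hμ
  classical
  have : Infinite s := aleph0_le_mk_iff.mp hinf
  let F : Finset s → Subgroup G := fun t => Subgroup.closure (Subtype.val '' (t : Set s))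
  have hF : Subgroup.closure s = ⨆ t, F t := by
    rw [← Subgroup.closure_iUnion]
    congr 1
    ext x
    simp only [mem_iUnion, mem_image, Finset.mem_coe, Subtype.exists, exists_and_right,
      exists_eq_right]
    exact ⟨fun hx => ⟨{⟨x, hx⟩}, hx, by simp⟩, fun ⟨_, hx, _⟩ => hx⟩
  have hF_fin (t : Finset s) : #(F t) < ℵ₀ := by
    simpa [F] using (hG (t.map (Embedding.subtype _))).lt_aleph0
  have hF_dir : Directed (· ≤ ·) F := fun t t' => ⟨t ∪ t',
    Subgroup.closure_mono (image_mono (by simp)), Subgroup.closure_mono (image_mono (by simp))⟩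
  calc #(Subgroup.closure s) = #(⋃ t, (F t : Set G)) := by
        rw [← Subgroup.coe_iSup_of_directed hF_dir, ← hF]; rfl
    _ ≤ #(Finset s) * ⨆ t, #(F t : Set G) := mk_iUnion_le _
    _ ≤ #s * ℵ₀ := by
        rw [mk_finset_of_infinite]
        gcongr
        exact ciSup_le' fun t => (hF_fin t).le
    _ < μ := mul_lt_of_lt (hinf.trans hs.le) hs (hinf.trans_lt hs)

theorem LocallyFiniteGroup.mk_sup_lt (hG : LocallyFiniteGroup G) (hμ : ℵ₀ ≤ μ)
    {P Q : Subgroup G} (hP : #P < μ) (hQ : #Q < μ) : #↥(P ⊔ Q) < μ := by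
  rw [← Subgroup.closure_eq P, ← Subgroup.closure_eq Q, ← Subgroup.closure_union]
  exact hG.mk_closure_lt hμ ((mk_union_le _ _).trans_lt (add_lt_of_lt hμ hP hQ))

def IsSmallIndecomp (μ : Cardinal.{u}) (A : Subgroup G) : Prop :=
  #A < μ ∧ GroupIndecomp ℵ₀ A

theorem IsSmallIndecomp.map {A : Subgroup G} (hA : IsSmallIndecomp μ A) {u : G →* K}
    (hu : Injective u) : IsSmallIndecomp μ (A.map u) :=
  ⟨(mk_congr (A.equivMapOfInjective u hu).toEquiv).symm.trans_lt hA.1,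
    hA.2.of_mulEquiv (A.equivMapOfInjective u hu)⟩

end Small

namespace KSpc

variable {μ : Cardinal.{u}} {G K : Type u} [Group G] [Group K]

theorem exists_isSmallIndecomp_iSup_eq_top (hG : KSpc μ G) :
    ∃ C : ℕ → Subgroup G, (∀ n, IsSmallIndecomp μ (C n)) ∧ ⨆ n, C n = ⊤ := by
  obtain ⟨-, -, ⟨-, C, -, hC, htop⟩, -⟩ := hG
  exact ⟨C, fun n => ⟨(hC n).2, (hC n).1⟩, htop⟩

theorem isSmallIndecomp_of_groupIndecomp (hG : KSpc μ G) {A : Subgroup G}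
    (hA : GroupIndecomp ℵ₀ A) : IsSmallIndecomp μ A := by
  obtain ⟨-, -, ⟨-, C, hCmono, hC, htop⟩, -⟩ := hG
  obtain ⟨n, hn⟩ := hA.exists_le_of_le_iSup hCmono (htop ▸ le_top)
  exact ⟨(mk_le_mk_of_subset hn).trans_lt (hC n).2, hA⟩

theorem exists_isSmallIndecomp_ge (hμ : ℵ₀ ≤ μ) (hG : KSpc μ G) {P Q : Subgroup G}
    (hP : IsSmallIndecomp μ P) (hQ : IsSmallIndecomp μ Q) :
    ∃ A, IsSmallIndecomp μ A ∧ P ≤ A ∧ Q ≤ A := by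
  obtain ⟨hlf, -, ⟨hb, -⟩, -⟩ := hG
  obtain ⟨M, hM, hMind, hMsmall, hle⟩ := hb (P ⊔ Q) (hlf.mk_sup_lt hμ hP.1 hQ.1)
  obtain ⟨i, hi⟩ := hP.2.exists_le_of_le_iSup hM (le_sup_left.trans hle)
  obtain ⟨j, hj⟩ := hQ.2.exists_le_of_le_iSup hM (le_sup_right.trans hle)
  exact ⟨M (max i j), ⟨(mk_le_mk_of_subset (le_iSup M _)).trans_lt hMsmall, hMind _⟩,
    hi.trans (hM (le_max_left i j)), hj.trans (hM (le_max_right i j))⟩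

theorem exists_leftInvOn (hG : KSpc μ G) {A : Subgroup G} (hA : IsSmallIndecomp μ A)
    (hK : LocallyFiniteGroup K) (hKμ : #K = μ) {v : G →* K} (hv : Injective v) :
    ∃ w : K →* G, Injective w ∧ ∀ x ∈ A, w (v x) = x := by
  obtain ⟨-, -, -, hc, -⟩ := hG
  obtain ⟨w, hw, hwv⟩ := hc A hA.1 hA.2 K _ hK hKμ v hv
  exact ⟨w, hw, fun x hx => DFunLike.congr_fun hwv ⟨x, hx⟩⟩

variable {G₁ G₂ : Type u} [Group G₁] [Group G₂]

theorem exists_extension_step (hμ : ℵ₀ ≤ μ) (h₁ : KSpc μ G₁) (h₂ : KSpc μ G₂)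
    {A C : Subgroup G₁} {D : Subgroup G₂} (hA : IsSmallIndecomp μ A)
    (hC : IsSmallIndecomp μ C) (hD : IsSmallIndecomp μ D) {u : G₁ →* G₂} (hu : Injective u) :
    ∃ (A' : Subgroup G₁) (u' : G₁ →* G₂), IsSmallIndecomp μ A' ∧ Injective u' ∧
      A ≤ A' ∧ EqOn u' u A ∧ C ≤ A' ∧ D ≤ A'.map u' := by
  obtain ⟨B, hB, huAB, hDB⟩ := h₂.exists_isSmallIndecomp_ge hμ (hA.map hu) hD
  obtain ⟨v, hv, hvu⟩ := h₁.exists_leftInvOn hA h₂.1 h₂.2.1 hu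
  obtain ⟨u', hu', hu'v⟩ := h₂.exists_leftInvOn hB h₁.1 h₁.2.1 hv
  obtain ⟨A', hA', hvBA', hCA'⟩ := h₁.exists_isSmallIndecomp_ge hμ (hB.map hv) hC
  have huB {x} (hx : x ∈ A) : u x ∈ B := huAB (Subgroup.mem_map_of_mem u hx)
  refine ⟨A', u', hA', hu', fun x hx => ?_, fun x hx => ?_, hCA', fun y hy => ?_⟩
  · exact hvBA' ⟨u x, huB hx, hvu x hx⟩
  · simpa only [hvu x hx] using hu'v _ (huB hx)
  · exact ⟨v y, hvBA' (Subgroup.mem_map_of_mem v (hDB hy)), hu'v y (hDB hy)⟩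

theorem exists_backAndForth_seq (hμ : ℵ₀ ≤ μ) (h₁ : KSpc μ G₁) (h₂ : KSpc μ G₂)
    {C₁ : ℕ → Subgroup G₁} {C₂ : ℕ → Subgroup G₂} (hC₁ : ∀ n, IsSmallIndecomp μ (C₁ n))
    (hC₂ : ∀ n, IsSmallIndecomp μ (C₂ n)) {A₀ : Subgroup G₁} (hA₀ : IsSmallIndecomp μ A₀)
    {u₀ : G₁ →* G₂} (hu₀ : Injective u₀) :
    ∃ (A : ℕ → Subgroup G₁) (u : ℕ → G₁ →* G₂), A 0 = A₀ ∧ u 0 = u₀ ∧ (∀ n, Injective (u n)) ∧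
      (∀ n, A n ≤ A (n + 1)) ∧ (∀ n, EqOn (u (n + 1)) (u n) (A n)) ∧ (∀ n, C₁ n ≤ A (n + 1)) ∧
      ∀ n, C₂ n ≤ (A (n + 1)).map (u (n + 1)) := by
  let State := {p : Subgroup G₁ × (G₁ →* G₂) // IsSmallIndecomp μ p.1 ∧ Injective p.2}
  have step (n : ℕ) (p : State) : ∃ q : State, p.1.1 ≤ q.1.1 ∧ EqOn q.1.2 p.1.2 p.1.1 ∧
      C₁ n ≤ q.1.1 ∧ C₂ n ≤ q.1.1.map q.1.2 := by
    obtain ⟨A', u', hA', hu', hle, heq, hC, hD⟩ :=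
      exists_extension_step hμ h₁ h₂ p.2.1 (hC₁ n) (hC₂ n) p.2.2
    exact ⟨⟨(A', u'), hA', hu'⟩, hle, heq, hC, hD⟩
  choose next hnext using step
  let s : ℕ → State := fun n => Nat.rec ⟨(A₀, u₀), hA₀, hu₀⟩ next n
  exact ⟨fun n => (s n).1.1, fun n => (s n).1.2, rfl, rfl, fun n => (s n).2.2,
    fun n => (hnext n (s n)).1, fun n => (hnext n (s n)).2.1, fun n => (hnext n (s n)).2.2.1,
    fun n => (hnext n (s n)).2.2.2⟩

end KSpc

section Limit

variable {G₁ G₂ : Type u} [Group G₁] [Group G₂] {A : ℕ → Subgroup G₁} {u : ℕ → G₁ →* G₂}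

theorem exists_mem_of_iSup_eq_top (hA : Monotone A) (htop : ⨆ n, A n = ⊤) (x : G₁) :
    ∃ n, x ∈ A n :=
  (Subgroup.mem_iSup_of_directed hA.directed_le).mp (htop ▸ Subgroup.mem_top x)

theorem eqOn_of_coherent (hA : Monotone A) (hcoh : ∀ n, EqOn (u (n + 1)) (u n) (A n))
    {n m : ℕ} (hnm : n ≤ m) : EqOn (u m) (u n) (A n) := by
  induction m, hnm using Nat.le_induction with
  | base => exact eqOn_refl _ _
  | succ m hnm ih => exact ((hcoh m).mono (hA hnm)).trans ih

theorem exists_monoidHom_of_coherent (hA : Monotone A) (htop : ⨆ n, A n = ⊤)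
    (hcoh : ∀ n, EqOn (u (n + 1)) (u n) (A n)) : ∃ φ : G₁ →* G₂, ∀ n, EqOn φ (u n) (A n) := by
  choose idx hidx using exists_mem_of_iSup_eq_top hA htop
  have hφ {x : G₁} {n : ℕ} (hx : x ∈ A n) : u (idx x) x = u n x := by
    rcases le_total (idx x) n with h | h
    · exact (eqOn_of_coherent hA hcoh h (hidx x)).symm
    · exact eqOn_of_coherent hA hcoh h hx
  let φ : G₁ →* G₂ :=
    { toFun x := u (idx x) x
      map_one' := (hφ (one_mem (A 0))).trans (map_one _)
      map_mul' x y := by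
        let k := max (idx x) (idx y)
        have hx : x ∈ A k := hA (le_max_left _ _) (hidx x)
        have hy : y ∈ A k := hA (le_max_right _ _) (hidx y)
        simp only [hφ (mul_mem hx hy), hφ hx, hφ hy, map_mul] }
  exact ⟨φ, fun n x hx => hφ hx⟩

theorem exists_mulEquiv_of_coherent (hA : Monotone A) (htop : ⨆ n, A n = ⊤)
    (hcoh : ∀ n, EqOn (u (n + 1)) (u n) (A n)) (hinj : ∀ n, Injective (u n))
    (hrange : ⨆ n, (A n).map (u n) = ⊤) : ∃ φ : G₁ ≃* G₂, ∀ n, EqOn φ (u n) (A n) := by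
  obtain ⟨φ, hφ⟩ := exists_monoidHom_of_coherent hA htop hcoh
  have hinjφ : Injective φ := by
    intro x y hxy
    obtain ⟨i, hi⟩ := exists_mem_of_iSup_eq_top hA htop x
    obtain ⟨j, hj⟩ := exists_mem_of_iSup_eq_top hA htop y
    have hx : x ∈ A (max i j) := hA (le_max_left i j) hi
    have hy : y ∈ A (max i j) := hA (le_max_right i j) hj
    exact hinj _ (by rw [← hφ _ hx, ← hφ _ hy, hxy])
  have hsurjφ : Surjective φ := by
    refine MonoidHom.range_eq_top.mp (eq_top_iff.mpr (hrange ▸ iSup_le fun n => ?_))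
    rintro _ ⟨x, hx, rfl⟩
    exact ⟨x, hφ n hx⟩
  exact ⟨MulEquiv.ofBijective φ ⟨hinjφ, hsurjφ⟩, hφ⟩

end Limit

theorem KSpc.exists_mulEquiv_eqOn {μ : Cardinal.{u}} {G₁ G₂ : Type u} [Group G₁] [Group G₂]
    (hμ : ℵ₀ ≤ μ) (h₁ : KSpc μ G₁) (h₂ : KSpc μ G₂) {A₀ : Subgroup G₁}
    (hA₀ : IsSmallIndecomp μ A₀) {u₀ : G₁ →* G₂} (hu₀ : Injective u₀) :
    ∃ φ : G₁ ≃* G₂, EqOn φ u₀ A₀ := by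
  obtain ⟨C₁, hC₁, hC₁top⟩ := h₁.exists_isSmallIndecomp_iSup_eq_top
  obtain ⟨C₂, hC₂, hC₂top⟩ := h₂.exists_isSmallIndecomp_iSup_eq_top
  obtain ⟨A, u, rfl, rfl, hinj, hA, hcoh, hC₁A, hC₂A⟩ :=
    h₁.exists_backAndForth_seq hμ h₂ hC₁ hC₂ hA₀ hu₀
  have htop : ⨆ n, A n = ⊤ := eq_top_iff.mpr <| hC₁top ▸
    iSup_le fun n => (hC₁A n).trans (le_iSup A (n + 1))
  have hrange : ⨆ n, (A n).map (u n) = ⊤ := eq_top_iff.mpr <| hC₂top ▸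
    iSup_le fun n => (hC₂A n).trans (le_iSup (fun n => (A n).map (u n)) (n + 1))
  obtain ⟨φ, hφ⟩ :=
    exists_mulEquiv_of_coherent (monotone_nat_of_le_succ hA) htop hcoh hinj hrange
  exact ⟨φ, hφ 0⟩

theorem KSpc_homogeneous_general (μ : Cardinal.{u})
    (hsl : μ.IsStrongLimit)
    (G₁ G₂ : Type u) [Group G₁] [Group G₂]
    (h₁ : KSpc μ G₁) (h₂ : KSpc μ G₂)
    (H : Type u) [Group H] (hHind : GroupIndecomp ℵ₀ H)
    (f₁ : H →* G₁) (f₂ : H →* G₂)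
    (hf₁ : Function.Injective f₁) (hf₂ : Function.Injective f₂)
    (hcompat : ∃ (G : Type u) (_ : Group G), LocallyFiniteGroup G ∧ #G = μ ∧
      ∃ (g₁ : G₁ →* G) (g₂ : G₂ →* G), Function.Injective g₁ ∧ Function.Injective g₂ ∧
        g₁.comp f₁ = g₂.comp f₂) :
    ∃ h : G₁ ≃* G₂, ∀ x : H, h (f₁ x) = f₂ x := by
  obtain ⟨G, _, hG, hGμ, g₁, g₂, hg₁, hg₂, hg⟩ := hcompat
  have hR₁ := h₁.isSmallIndecomp_of_groupIndecomp (hHind.of_mulEquiv (MonoidHom.ofInjective hf₁))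
  have hR₂ := h₂.isSmallIndecomp_of_groupIndecomp (hHind.of_mulEquiv (MonoidHom.ofInjective hf₂))
  obtain ⟨π, hπ, hπg₂⟩ := h₂.exists_leftInvOn hR₂ hG hGμ hg₂
  have hu₀ (x : H) : π (g₁ (f₁ x)) = f₂ x := by
    rw [← MonoidHom.comp_apply g₁, hg, MonoidHom.comp_apply]
    exact hπg₂ _ ⟨x, rfl⟩
  obtain ⟨φ, hφ⟩ :=
    h₁.exists_mulEquiv_eqOn hsl.aleph0_le h₂ hR₁ (u₀ := π.comp g₁) (hπ.comp hg₁)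
  exact ⟨φ, fun x => (hφ ⟨x, rfl⟩).trans (hu₀ x)⟩

/-- homogeneity of special models, `(∗)₅(b)`. -/
theorem KSpc_homogeneous (μ : Cardinal.{u})
    (hsl : μ.IsStrongLimit) (hcof : μ.ord.cof = ℵ₀)
    (G₁ G₂ : Type u) [Group G₁] [Group G₂]
    (h₁ : KSpc μ G₁) (h₂ : KSpc μ G₂)
    (H : Type u) [Group H] (hH : LocallyFiniteGroup H) (hHind : GroupIndecomp ℵ₀ H)
    (f₁ : H →* G₁) (f₂ : H →* G₂)
    (hf₁ : Function.Injective f₁) (hf₂ : Function.Injective f₂)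
    (hcompat : ∃ (G : Type u) (_ : Group G), LocallyFiniteGroup G ∧ #G = μ ∧
      ∃ (g₁ : G₁ →* G) (g₂ : G₂ →* G), Function.Injective g₁ ∧ Function.Injective g₂ ∧
        g₁.comp f₁ = g₂.comp f₂) :
    ∃ h : G₁ ≃* G₂, ∀ x : H, h (f₁ x) = f₂ x :=
  KSpc_homogeneous_general μ hsl G₁ G₂ h₁ h₂ H hHind f₁ f₂ hf₁ hf₂ hcompat
end
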